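/- There exist constants C > 0 and M > 0 (depending only on m, the speeds a_1,…,a_m and the vectors l_1,…,l_m) such that for all y ≤ 0 and all t ≥ 1, |∂_t ∂_y e(y,t)| ≤ C t^{−1} Σ_{k=1}^m ( e^{−(y + a_k t)²/(M t)} + e^{−(y − a_k t)²/(M t)} ). -/

import Mathlib

open MeasureTheory Real Set
open scoped ENNReal

/-- errfn(z) := (1/√π) ∫_{−∞}^{z} e^{−u²} du -/
noncomputable def errfn (z : ℝ) : ℝ :=
  (Real.sqrt Real.pi)⁻¹ * ∫ u in Set.Iic z, Real.exp (-u ^ 2)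

/-- e(y,t) := Σ_{k} ( errfn((y + a_k t)/√(4t)) − errfn((y − a_k t)/√(4t)) ) l_k -/
noncomputable def eKer {n m : ℕ} (a : Fin m → ℝ) (l : Fin m → EuclideanSpace ℝ (Fin n))
    (y t : ℝ) : EuclideanSpace ℝ (Fin n) :=
  ∑ k, (errfn ((y + a k * t) / Real.sqrt (4 * t))
      - errfn ((y - a k * t) / Real.sqrt (4 * t))) • l k

open Finset Filter

/-! Since `errfn' z = π^{-1/2} e^{-z²}`, we have
`∂_y e(y,t) = Σ_k (K(y + a_k t, t) - K(y - a_k t, t)) l_k`, where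
`K(x,t) = (4πt)^{-1/2} e^{-x²/(4t)}` is the heat kernel. Along a characteristic `x = y + c t`,
`∂_t K = K · ((x/2t)² - c (x/2t) - 1/(2t))`. Writing `t = s²` and `x = 2 s z`, for `s ≥ 1` this
is bounded by `s⁻² (z² + |c||z| + 1) e^{-z²} ≤ (|c| + 3) t⁻¹ e^{-z²/2}`, and `z²/2 = x²/(8t)`,
so the claim holds with `M = 8`. -/

theorem hasDerivAt_integral_Iic {E : Type*} [NormedAddCommGroup E] [NormedSpace ℝ E]
    [CompleteSpace E] {f : ℝ → E} (hf : Integrable f) (hc : Continuous f) (z : ℝ) :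
    HasDerivAt (fun w => ∫ u in Iic w, f u) (f z) z := by
  have hsplit : (fun w => ∫ u in Iic w, f u)
      = fun w => (∫ u in Iic 0, f u) + ∫ u in (0 : ℝ)..w, f u := by
    ext w
    rw [← intervalIntegral.integral_Iic_sub_Iic hf.integrableOn hf.integrableOn, add_sub_cancel]
  rw [hsplit]
  exact (intervalIntegral.integral_hasDerivAt_right hf.intervalIntegrable
    hc.stronglyMeasurable.stronglyMeasurableAtFilter hc.continuousAt).const_add _

theorem hasDerivAt_errfn (z : ℝ) : HasDerivAt errfn ((√π)⁻¹ * exp (-z ^ 2)) z :=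
  (hasDerivAt_integral_Iic (by simpa using integrable_exp_neg_mul_sq one_pos)
    (by fun_prop) z).const_mul _

noncomputable def movingHeatKernel (c y t : ℝ) : ℝ :=
  exp (-(y + c * t) ^ 2 / (4 * t)) / √(4 * π * t)

theorem hasDerivAt_errfn_add_mul_div_sqrt (c : ℝ) {t : ℝ} (ht : 0 < t) (y : ℝ) :
    HasDerivAt (fun y' => errfn ((y' + c * t) / √(4 * t))) (movingHeatKernel c y t) y := by
  refine ((hasDerivAt_errfn _).comp y
    (((hasDerivAt_id' y).add_const (c * t)).div_const √(4 * t))).congr_deriv ?_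
  have hsplit : √(4 * π * t) = √π * √(4 * t) := by
    rw [← sqrt_mul pi_pos.le]
    ring_nf
  rw [movingHeatKernel, hsplit, div_pow, sq_sqrt (by positivity)]
  field_simp

theorem hasDerivAt_movingHeatKernel (c y : ℝ) {t : ℝ} (ht : 0 < t) :
    HasDerivAt (movingHeatKernel c y) (movingHeatKernel c y t *
      (((y + c * t) / (2 * t)) ^ 2 - c * ((y + c * t) / (2 * t)) - 1 / (2 * t))) t := by
  have hx : HasDerivAt (fun t => y + c * t) c t := by
    simpa using ((hasDerivAt_id t).const_mul c).const_add y
  have hexp := (((hx.fun_pow 2).fun_neg).fun_div ((hasDerivAt_id' t).const_mul 4)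
    (by positivity)).exp
  have hsqrt := ((hasDerivAt_id' t).const_mul (4 * π)).sqrt (by positivity)
  refine (hexp.fun_div hsqrt (by positivity)).congr_deriv ?_
  have hS : 0 < √(4 * π * t) := by positivity
  have h : √(4 * π * t) ^ 2 = 4 * π * t := sq_sqrt (by positivity)
  rw [movingHeatKernel]
  set S := √(4 * π * t)
  field_simp
  rw [h]
  ring

theorem add_mul_exp_neg_sq_le (z : ℝ) {k : ℝ} (hk : 0 ≤ k) :
    (z ^ 2 + k * |z| + 1) * exp (-z ^ 2) ≤ (k + 3) * exp (-z ^ 2 / 2) := by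
  have hE := add_one_le_exp (z ^ 2 / 2)
  have habs : |z| ≤ exp (z ^ 2 / 2) := by nlinarith [sq_abs z, sq_nonneg (|z| - 1)]
  have hpoly : z ^ 2 + k * |z| + 1 ≤ (k + 3) * exp (z ^ 2 / 2) := by
    nlinarith [mul_le_mul_of_nonneg_left habs hk, sq_nonneg z]
  calc (z ^ 2 + k * |z| + 1) * exp (-z ^ 2)
      ≤ (k + 3) * exp (z ^ 2 / 2) * exp (-z ^ 2) := by gcongr
    _ = (k + 3) * exp (-z ^ 2 / 2) := by rw [mul_assoc, ← exp_add]; ring_nf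

theorem exp_neg_sq_div_mul_abs_le {s : ℝ} (hs : 1 ≤ s) (c z : ℝ) :
    exp (-z ^ 2) / (√(4 * π) * s) * |(z * s⁻¹) ^ 2 - c * (z * s⁻¹) - 1 / (2 * s ^ 2)|
      ≤ (|c| + 3) * (s ^ 2)⁻¹ * exp (-z ^ 2 / 2) := by
  have hπ : 1 ≤ √(4 * π) := one_le_sqrt.2 (by linarith [pi_gt_three])
  have hs0 : 0 < s := by linarith
  set u := s⁻¹ with hu
  have hu0 : 0 < u := by positivity
  have hu1 : u ≤ 1 := inv_le_one_of_one_le₀ hs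
  have hprefactor : exp (-z ^ 2) / (√(4 * π) * s) ≤ exp (-z ^ 2) * u := by
    rw [hu, ← div_eq_mul_inv]
    gcongr
    nlinarith
  have hbracket :
      |(z * u) ^ 2 - c * (z * u) - 1 / (2 * s ^ 2)| ≤ u * (z ^ 2 + |c| * |z| + 1) := by
    have hsq : 1 / (2 * s ^ 2) = u ^ 2 / 2 := by rw [hu]; field_simp
    rw [hsq, abs_le]
    constructor <;> nlinarith [abs_le.1 (abs_mul c z).le, sq_nonneg z,
      mul_le_mul_of_nonneg_left hu1 hu0.le]
  calc exp (-z ^ 2) / (√(4 * π) * s) * |(z * u) ^ 2 - c * (z * u) - 1 / (2 * s ^ 2)|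
      ≤ exp (-z ^ 2) * u * (u * (z ^ 2 + |c| * |z| + 1)) :=
        mul_le_mul hprefactor hbracket (abs_nonneg _) (by positivity)
    _ = u ^ 2 * ((z ^ 2 + |c| * |z| + 1) * exp (-z ^ 2)) := by ring
    _ ≤ u ^ 2 * ((|c| + 3) * exp (-z ^ 2 / 2)) :=
        mul_le_mul_of_nonneg_left (add_mul_exp_neg_sq_le z (abs_nonneg c)) (by positivity)
    _ = (|c| + 3) * (s ^ 2)⁻¹ * exp (-z ^ 2 / 2) := by rw [hu, inv_pow]; ring

theorem abs_deriv_movingHeatKernel_le (c y : ℝ) {t : ℝ} (ht : 1 ≤ t) :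
    |deriv (movingHeatKernel c y) t| ≤ (|c| + 3) * t⁻¹ * exp (-(y + c * t) ^ 2 / (8 * t)) := by
  rw [(hasDerivAt_movingHeatKernel c y (by linarith)).deriv, movingHeatKernel]
  generalize y + c * t = x
  obtain ⟨s, hs, rfl⟩ : ∃ s, 1 ≤ s ∧ t = s ^ 2 :=
    ⟨√t, one_le_sqrt.2 ht, (sq_sqrt (by linarith)).symm⟩
  have hs0 : 0 < s := by linarith
  obtain ⟨z, rfl⟩ : ∃ z, x = 2 * s * z := ⟨x / (2 * s), by field_simp⟩
  have hexp4 : -(2 * s * z) ^ 2 / (4 * s ^ 2) = -z ^ 2 := by field_simp; ring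
  have hexp8 : -(2 * s * z) ^ 2 / (8 * s ^ 2) = -z ^ 2 / 2 := by field_simp; ring
  have hratio : 2 * s * z / (2 * s ^ 2) = z * s⁻¹ := by field_simp
  have hsqrt : √(4 * π * s ^ 2) = √(4 * π) * s := by
    rw [sqrt_mul (by positivity), sqrt_sq hs0.le]
  rw [hexp4, hexp8, hratio, hsqrt, abs_mul, abs_of_pos (by positivity)]
  exact exp_neg_sq_div_mul_abs_le hs c z

section eKer

variable {n m : ℕ} (a : Fin m → ℝ) (l : Fin m → EuclideanSpace ℝ (Fin n))

theorem hasDerivAt_eKer_fst {t : ℝ} (ht : 0 < t) (y : ℝ) :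
    HasDerivAt (fun y' => eKer a l y' t)
      (∑ k, (movingHeatKernel (a k) y t - movingHeatKernel (-a k) y t) • l k) y := by
  refine HasDerivAt.fun_sum fun k _ =>
    ((hasDerivAt_errfn_add_mul_div_sqrt (a k) ht y).sub ?_).smul_const (l k)
  simpa only [neg_mul, ← sub_eq_add_neg] using hasDerivAt_errfn_add_mul_div_sqrt (-a k) ht y

theorem hasDerivAt_deriv_eKer_fst (y : ℝ) {t : ℝ} (ht : 0 < t) :
    HasDerivAt (fun t' => deriv (fun y' => eKer a l y' t') y)
      (∑ k, (deriv (movingHeatKernel (a k) y) t - deriv (movingHeatKernel (-a k) y) t) • l k)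
      t := by
  have hderiv : ∀ c, HasDerivAt (movingHeatKernel c y) (deriv (movingHeatKernel c y) t) t :=
    fun c => (hasDerivAt_movingHeatKernel c y ht).differentiableAt.hasDerivAt
  refine (HasDerivAt.fun_sum fun k _ =>
    ((hderiv (a k)).sub (hderiv (-a k))).smul_const (l k)).congr_of_eventuallyEq ?_
  filter_upwards [eventually_gt_nhds ht] with t' ht'
  exact (hasDerivAt_eKer_fst a l ht' y).deriv

end eKer

theorem stmt3_general {n m : ℕ} (a : Fin m → ℝ)
    (l : Fin m → EuclideanSpace ℝ (Fin n)) :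
    ∃ C : ℝ, 0 < C ∧ ∃ M : ℝ, 0 < M ∧ ∀ y : ℝ, y ≤ 0 → ∀ t : ℝ, 1 ≤ t →
      ‖deriv (fun t' => deriv (fun y' => eKer a l y' t') y) t‖
        ≤ C * t ^ (-1 : ℝ) *
          ∑ k, (Real.exp (-(y + a k * t) ^ 2 / (M * t))
            + Real.exp (-(y - a k * t) ^ 2 / (M * t))) := by
  set C := 1 + ∑ k, (|a k| + 3) * ‖l k‖
  have hC : ∀ k, (|a k| + 3) * ‖l k‖ ≤ C := fun k => by
    have := single_le_sum (fun j _ => by positivity) (mem_univ k)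
      (f := fun j => (|a j| + 3) * ‖l j‖)
    linarith
  refine ⟨C, by positivity, 8, by norm_num, fun y _ t ht => ?_⟩
  rw [(hasDerivAt_deriv_eKer_fst a l y (by linarith)).deriv, rpow_neg_one, mul_sum]
  refine norm_sum_le_of_le _ fun k _ => ?_
  have hplus := abs_deriv_movingHeatKernel_le (a k) y ht
  have hminus := abs_deriv_movingHeatKernel_le (-a k) y ht
  rw [abs_neg, neg_mul, ← sub_eq_add_neg] at hminus
  calc ‖(deriv (movingHeatKernel (a k) y) t - deriv (movingHeatKernel (-a k) y) t) • l k‖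
      ≤ (|deriv (movingHeatKernel (a k) y) t| + |deriv (movingHeatKernel (-a k) y) t|)
          * ‖l k‖ := by
        rw [norm_smul, norm_eq_abs]
        gcongr
        exact abs_sub _ _
    _ ≤ ((|a k| + 3) * ‖l k‖) * t⁻¹ * (exp (-(y + a k * t) ^ 2 / (8 * t))
          + exp (-(y - a k * t) ^ 2 / (8 * t))) := by
        nlinarith [norm_nonneg (l k)]
    _ ≤ C * t⁻¹ * (exp (-(y + a k * t) ^ 2 / (8 * t))
          + exp (-(y - a k * t) ^ 2 / (8 * t))) := by
        gcongr
        exact hC k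

theorem stmt3 {n m : ℕ} (hm : 1 ≤ m) (a : Fin m → ℝ) (ha : ∀ k, 0 < a k)
    (l : Fin m → EuclideanSpace ℝ (Fin n)) :
    ∃ C : ℝ, 0 < C ∧ ∃ M : ℝ, 0 < M ∧ ∀ y : ℝ, y ≤ 0 → ∀ t : ℝ, 1 ≤ t →
      ‖deriv (fun t' => deriv (fun y' => eKer a l y' t') y) t‖
        ≤ C * t ^ (-1 : ℝ) *
          ∑ k, (Real.exp (-(y + a k * t) ^ 2 / (M * t))
            + Real.exp (-(y - a k * t) ^ 2 / (M * t))) :=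
  stmt3_general a l
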